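/- arXiv:2310.10117 — 2 statements merged into one kernel-verified Lean document; each statement's English description precedes it below -/
import Mathlib

section
/- Let H be a real inner product space, J : H → H firmly nonexpansive with fixed point z*, β > 0, s̄ > 0, n ≥ 1 a natural number, and set τ_k = s̄/(k+1)² and r_0 = ‖z^0 − z*‖. Let (z^k)_{k≥0} be a sequence in H with ‖z^{k+1} − J(z^k)‖ ≤ β√n·τ_k for all k ≥ 0. Then for every integer K ≥ 1: (i) min over K ≤ k ≤ 2K of (τ_k + ‖z^{k+1} − z^k‖/β) ≤ (s̄ + √2(r_0 + 4√n·s̄·β)/β)/√(K+1); and (ii) for any ε_1, ε_2 ∈ (0,1), if K + 1 ≥ (s̄ + √2(r_0 + 4√n·s̄·β)/β)² · max{ε_1^{−2}, ε_2^{−2}}, then there exists k with K ≤ k ≤ 2K such that τ_k + ‖z^{k+1} − z^k‖/β ≤ ε_1 and ‖z^{k+1} − z^k‖/β ≤ ε_2. -/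
/-!
Firm nonexpansiveness at the fixed point gives `‖z - J z‖² + ‖J z - z*‖² ≤ ‖z - z*‖²`, so along
the perturbed iteration the squared distance to `z*` drops by the squared residual
`‖z^k - J z^k‖²`, up to an error of order `δ_k = β √n s̄ / (k+1)²`. As `∑ δ_k ≤ 2 β √n s̄`, the
iterates stay within `r₀ + 2 β √n s̄` of `z*`, and telescoping over `K ≤ k ≤ 2K` bounds the sum of
these `K + 1` squared residuals by `(r₀ + 3 β √n s̄)²`. Hence the smallest one is `O(1/√K)`, and
the step `‖z^{k+1} - z^k‖` exceeds the residual by at most `δ_k`.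
-/

open Finset Function

def FirmlyNonexpansive {E : Type*} [SeminormedAddCommGroup E] (J : E → E) : Prop :=
  ∀ x y, ‖J x - J y‖ ^ 2 + ‖(x - J x) - (y - J y)‖ ^ 2 ≤ ‖x - y‖ ^ 2

theorem sum_Ico_div_succ_sq_le {c : ℝ} (hc : 0 ≤ c) (a b : ℕ) :
    ∑ k ∈ Ico a b, c / ((k : ℝ) + 1) ^ 2 ≤ 2 * c / (a + 1) := by
  have hsub : Ico (a + 1) (b + 1) ⊆ Ioo a (b + 1) := fun i hi => by
    simp only [mem_Ico, mem_Ioo] at hi ⊢; omega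
  have hinv : ∑ k ∈ Ico a b, (((k + 1 : ℕ) : ℝ) ^ 2)⁻¹ ≤ 2 / (a + 1) := by
    rw [sum_Ico_add' (fun i : ℕ => ((i : ℝ) ^ 2)⁻¹)]
    exact (sum_le_sum_of_subset_of_nonneg hsub fun _ _ _ => by positivity).trans
      (sum_Ioo_inv_sq_le a (b + 1))
  simp only [div_eq_mul_inv c, ← mul_sum, Nat.cast_succ] at hinv ⊢
  calc c * ∑ k ∈ Ico a b, (((k : ℝ) + 1) ^ 2)⁻¹ ≤ c * (2 / (a + 1)) := by gcongr
    _ = 2 * c * ((a : ℝ) + 1)⁻¹ := by ring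

theorem div_succ_sq_mul_sqrt_le {c : ℝ} (hc : 0 ≤ c) {K k : ℕ} (hKk : K ≤ k) :
    c / ((k : ℝ) + 1) ^ 2 * √((K : ℝ) + 1) ≤ c := by
  have hK : (K : ℝ) + 1 ≤ (k : ℝ) + 1 := by gcongr
  have hk : (1 : ℝ) ≤ (k : ℝ) + 1 := by linarith [k.cast_nonneg (α := ℝ)]
  have hsqrt : √((K : ℝ) + 1) ≤ ((k : ℝ) + 1) ^ 2 :=
    Real.sqrt_le_iff.mpr ⟨by positivity, by nlinarith [one_le_pow₀ (n := 2) hk]⟩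
  rw [div_mul_eq_mul_div, div_le_iff₀ (by positivity)]
  exact mul_le_mul_of_nonneg_left hsqrt hc

theorem div_sqrt_le_of_sq_mul_one_div_sq_le {C ε x : ℝ} (hε : 0 < ε)
    (h : C ^ 2 * (1 / ε ^ 2) ≤ x) : C / √x ≤ ε := by
  have hC : C ^ 2 ≤ (ε * √x) ^ 2 := by
    rw [mul_pow, Real.sq_sqrt ((by positivity : 0 ≤ C ^ 2 * (1 / ε ^ 2)).trans h)]
    rwa [← div_eq_mul_one_div, div_le_iff₀' (by positivity)] at h
  refine div_le_of_le_mul₀ (Real.sqrt_nonneg x) hε.le ?_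
  exact (abs_le_of_sq_le_sq' hC (by positivity)).2

theorem LipschitzWith.norm_sub_le_add_sum {E : Type*} [SeminormedAddCommGroup E] {J : E → E}
    {p : E} {z : ℕ → E} {δ : ℕ → ℝ} (hJ : LipschitzWith 1 J) (hp : IsFixedPt J p)
    (hz : ∀ k, ‖z (k + 1) - J (z k)‖ ≤ δ k) (k : ℕ) :
    ‖z k - p‖ ≤ ‖z 0 - p‖ + ∑ j ∈ range k, δ j := by
  induction k with
  | zero => simp
  | succ k ih =>
    calc ‖z (k + 1) - p‖ ≤ ‖z (k + 1) - J (z k)‖ + ‖J (z k) - J p‖ := by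
          simpa only [hp.eq] using norm_sub_le_norm_sub_add_norm_sub _ _ _
      _ ≤ δ k + ‖z k - p‖ := add_le_add (hz k) (by simpa using hJ.norm_sub_le (z k) p)
      _ ≤ ‖z 0 - p‖ + ∑ j ∈ range (k + 1), δ j := by rw [sum_range_succ]; linarith

namespace FirmlyNonexpansive

variable {E : Type*} [SeminormedAddCommGroup E] {J : E → E}

theorem norm_sub_le (hJ : FirmlyNonexpansive J) (x y : E) : ‖J x - J y‖ ≤ ‖x - y‖ :=
  le_of_sq_le_sq (by linarith [hJ x y, sq_nonneg ‖(x - J x) - (y - J y)‖]) (norm_nonneg _)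

theorem lipschitzWith_one (hJ : FirmlyNonexpansive J) : LipschitzWith 1 J :=
  LipschitzWith.of_dist_le_mul fun x y => by
    simpa only [dist_eq_norm, NNReal.coe_one, one_mul] using hJ.norm_sub_le x y

theorem sq_norm_sub_add_sq_norm_sub_le (hJ : FirmlyNonexpansive J) {p : E} (hp : IsFixedPt J p)
    (x : E) : ‖x - J x‖ ^ 2 + ‖J x - p‖ ^ 2 ≤ ‖x - p‖ ^ 2 := by
  have := hJ x p
  rw [hp, sub_self, sub_zero] at this
  linarith

variable {p : E} {z : ℕ → E} {δ : ℕ → ℝ}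

theorem sq_norm_sub_add_sq_norm_succ_sub_le (hJ : FirmlyNonexpansive J) (hp : IsFixedPt J p)
    (hz : ∀ k, ‖z (k + 1) - J (z k)‖ ≤ δ k) (k : ℕ) :
    ‖z k - J (z k)‖ ^ 2 + ‖z (k + 1) - p‖ ^ 2 ≤ ‖z k - p‖ ^ 2 + δ k * (2 * ‖z k - p‖ + δ k) := by
  have hfirm := hJ.sq_norm_sub_add_sq_norm_sub_le hp (z k)
  have hJz : ‖J (z k) - p‖ ≤ ‖z k - p‖ := by simpa only [hp.eq] using hJ.norm_sub_le (z k) p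
  have hnext : ‖z (k + 1) - p‖ ≤ ‖J (z k) - p‖ + δ k := by
    linarith [norm_sub_le_norm_sub_add_norm_sub (z (k + 1)) (J (z k)) p, hz k]
  have hδ : 0 ≤ δ k := (norm_nonneg _).trans (hz k)
  have hsq : ‖z (k + 1) - p‖ ^ 2 ≤ (‖J (z k) - p‖ + δ k) ^ 2 := by gcongr
  nlinarith

theorem sum_Ico_sq_norm_sub_le (hJ : FirmlyNonexpansive J) (hp : IsFixedPt J p)
    (hz : ∀ k, ‖z (k + 1) - J (z k)‖ ≤ δ k) {a b : ℕ} (hab : a ≤ b) :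
    ∑ k ∈ Ico a b, ‖z k - J (z k)‖ ^ 2 ≤
      ‖z a - p‖ ^ 2 + ∑ k ∈ Ico a b, δ k * (2 * ‖z k - p‖ + δ k) := by
  calc ∑ k ∈ Ico a b, ‖z k - J (z k)‖ ^ 2
      ≤ ∑ k ∈ Ico a b, (δ k * (2 * ‖z k - p‖ + δ k) - (‖z (k + 1) - p‖ ^ 2 - ‖z k - p‖ ^ 2)) :=
        sum_le_sum fun k _ => by linarith [hJ.sq_norm_sub_add_sq_norm_succ_sub_le hp hz k]
    _ = ‖z a - p‖ ^ 2 - ‖z b - p‖ ^ 2 + ∑ k ∈ Ico a b, δ k * (2 * ‖z k - p‖ + δ k) := by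
        rw [sum_sub_distrib, sum_Ico_sub (fun k => ‖z k - p‖ ^ 2) hab]; ring
    _ ≤ ‖z a - p‖ ^ 2 + ∑ k ∈ Ico a b, δ k * (2 * ‖z k - p‖ + δ k) := by
        linarith [sq_nonneg ‖z b - p‖]

theorem exists_norm_sub_mul_sqrt_le (hJ : FirmlyNonexpansive J) (hp : IsFixedPt J p) {c : ℝ}
    (hc : 0 ≤ c) (hz : ∀ k, ‖z (k + 1) - J (z k)‖ ≤ c / ((k : ℝ) + 1) ^ 2) {K : ℕ} (hK : 1 ≤ K) :
    ∃ k, K ≤ k ∧ k ≤ 2 * K ∧ ‖z k - J (z k)‖ * √((K : ℝ) + 1) ≤ ‖z 0 - p‖ + 3 * c := by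
  set R := ‖z 0 - p‖ + 2 * c
  have hR : ∀ k, ‖z k - p‖ ≤ R := fun k => by
    have hsum := sum_Ico_div_succ_sq_le hc 0 k
    rw [← range_eq_Ico, Nat.cast_zero, zero_add, div_one] at hsum
    linarith [hJ.lipschitzWith_one.norm_sub_le_add_sum hp hz k]
  have hδ : ∀ k : ℕ, c / ((k : ℝ) + 1) ^ 2 ≤ c := fun k =>
    div_le_self hc (one_le_pow₀ (by linarith [k.cast_nonneg (α := ℝ)]))
  have htail : ∑ k ∈ Ico K (2 * K + 1), c / ((k : ℝ) + 1) ^ 2 ≤ c := by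
    refine (sum_Ico_div_succ_sq_le hc _ _).trans ?_
    have : (1 : ℝ) ≤ K := by exact_mod_cast hK
    rw [div_le_iff₀ (by positivity)]
    nlinarith
  have hsum : ∑ k ∈ Ico K (2 * K + 1), ‖z k - J (z k)‖ ^ 2 ≤ (R + c) ^ 2 := calc
    _ ≤ ‖z K - p‖ ^ 2 + ∑ k ∈ Ico K (2 * K + 1),
          c / ((k : ℝ) + 1) ^ 2 * (2 * ‖z k - p‖ + c / ((k : ℝ) + 1) ^ 2) :=
        hJ.sum_Ico_sq_norm_sub_le hp hz (by omega)
    _ ≤ R ^ 2 + ∑ k ∈ Ico K (2 * K + 1), c / ((k : ℝ) + 1) ^ 2 * (2 * R + c) := by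
        gcongr with k
        exacts [hR K, hR k, hδ k]
    _ ≤ R ^ 2 + c * (2 * R + c) := by rw [← sum_mul]; gcongr
    _ = (R + c) ^ 2 := by ring
  obtain ⟨k, hk, hmin⟩ := exists_le_of_sum_le (g := fun _ => (R + c) ^ 2 / ((K : ℝ) + 1))
    (nonempty_Ico.2 (by omega)) <| hsum.trans_eq <| by
      rw [sum_const, Nat.card_Ico, show 2 * K + 1 - K = K + 1 by omega, nsmul_eq_mul]
      push_cast
      field_simp
  obtain ⟨hKk, hk2K⟩ := mem_Ico.1 hk
  refine ⟨k, hKk, by omega, le_of_sq_le_sq ?_ (by positivity)⟩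
  rw [mul_pow, Real.sq_sqrt (by positivity), ← le_div_iff₀ (by positivity)]
  convert hmin using 2
  ring

theorem exists_norm_succ_sub_mul_sqrt_le (hJ : FirmlyNonexpansive J) (hp : IsFixedPt J p) {c : ℝ}
    (hc : 0 ≤ c) (hz : ∀ k, ‖z (k + 1) - J (z k)‖ ≤ c / ((k : ℝ) + 1) ^ 2) {K : ℕ} (hK : 1 ≤ K) :
    ∃ k, K ≤ k ∧ k ≤ 2 * K ∧ ‖z (k + 1) - z k‖ * √((K : ℝ) + 1) ≤ ‖z 0 - p‖ + 4 * c := by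
  obtain ⟨k, hKk, hk2K, hres⟩ := hJ.exists_norm_sub_mul_sqrt_le hp hc hz hK
  refine ⟨k, hKk, hk2K, ?_⟩
  have herr := mul_le_mul_of_nonneg_right (hz k) (Real.sqrt_nonneg ((K : ℝ) + 1))
  have hdiff : ‖z (k + 1) - z k‖ ≤ ‖z (k + 1) - J (z k)‖ + ‖z k - J (z k)‖ := by
    simpa only [norm_sub_rev (J (z k))] using norm_sub_le_norm_sub_add_norm_sub _ (J (z k)) _
  calc ‖z (k + 1) - z k‖ * √((K : ℝ) + 1)
      ≤ ‖z (k + 1) - J (z k)‖ * √((K : ℝ) + 1) + ‖z k - J (z k)‖ * √((K : ℝ) + 1) := by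
        rw [← add_mul]; gcongr
    _ ≤ c + (‖z 0 - p‖ + 3 * c) := add_le_add (herr.trans (div_succ_sq_mul_sqrt_le hc hKk)) hres
    _ = ‖z 0 - p‖ + 4 * c := by ring

end FirmlyNonexpansive

theorem stmt_4_general {H : Type*} [NormedAddCommGroup H]
    (J : H → H)
    (hJ : ∀ x y : H, ‖J x - J y‖ ^ 2 + ‖(x - J x) - (y - J y)‖ ^ 2 ≤ ‖x - y‖ ^ 2)
    (zstar : H) (hfix : J zstar = zstar)
    (β sbar : ℝ) (hβ : 0 < β) (hsbar : 0 < sbar) (n : ℕ)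
    (τ : ℕ → ℝ) (hτ : ∀ k : ℕ, τ k = sbar / ((k : ℝ) + 1) ^ 2)
    (z : ℕ → H)
    (r0 : ℝ) (hr0 : r0 = ‖z 0 - zstar‖)
    (hz : ∀ k : ℕ, ‖z (k + 1) - J (z k)‖ ≤ β * Real.sqrt n * τ k) :
    (∀ K : ℕ, 1 ≤ K →
      ∃ k : ℕ, K ≤ k ∧ k ≤ 2 * K ∧
        τ k + ‖z (k + 1) - z k‖ / β ≤
          (sbar + Real.sqrt 2 * (r0 + 4 * Real.sqrt n * sbar * β) / β) /
            Real.sqrt ((K : ℝ) + 1)) ∧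
    (∀ K : ℕ, 1 ≤ K → ∀ ε1 ε2 : ℝ, 0 < ε1 → ε1 < 1 → 0 < ε2 → ε2 < 1 →
      (sbar + Real.sqrt 2 * (r0 + 4 * Real.sqrt n * sbar * β) / β) ^ 2 *
          max (1 / ε1 ^ 2) (1 / ε2 ^ 2) ≤ (K : ℝ) + 1 →
      ∃ k : ℕ, K ≤ k ∧ k ≤ 2 * K ∧
        τ k + ‖z (k + 1) - z k‖ / β ≤ ε1 ∧ ‖z (k + 1) - z k‖ / β ≤ ε2) := by
  subst hr0
  have hc : 0 ≤ β * √n * sbar := by positivity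
  have herr (k : ℕ) : ‖z (k + 1) - J (z k)‖ ≤ β * √n * sbar / ((k : ℝ) + 1) ^ 2 := by
    simpa only [hτ, mul_div_assoc] using hz k
  have part_i : ∀ K : ℕ, 1 ≤ K → ∃ k : ℕ, K ≤ k ∧ k ≤ 2 * K ∧ τ k + ‖z (k + 1) - z k‖ / β ≤
      (sbar + √2 * (‖z 0 - zstar‖ + 4 * √n * sbar * β) / β) / √((K : ℝ) + 1) := by
    intro K hK
    obtain ⟨k, hKk, hk2K, hdiff⟩ :=
      FirmlyNonexpansive.exists_norm_succ_sub_mul_sqrt_le hJ hfix hc herr hK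
    refine ⟨k, hKk, hk2K, ?_⟩
    have hτk : τ k * √((K : ℝ) + 1) ≤ sbar := hτ k ▸ div_succ_sq_mul_sqrt_le hsbar.le hKk
    rw [le_div_iff₀ (by positivity)]
    calc (τ k + ‖z (k + 1) - z k‖ / β) * √((K : ℝ) + 1)
        = τ k * √((K : ℝ) + 1) + ‖z (k + 1) - z k‖ * √((K : ℝ) + 1) / β := by ring
      _ ≤ sbar + (‖z 0 - zstar‖ + 4 * √n * sbar * β) / β := by
        gcongr
        linarith
      _ ≤ sbar + √2 * (‖z 0 - zstar‖ + 4 * √n * sbar * β) / β := by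
        gcongr
        exact le_mul_of_one_le_left (by positivity) Real.one_lt_sqrt_two.le
  refine ⟨part_i, fun K hK ε1 ε2 hε1 _ hε2 _ hKε => ?_⟩
  obtain ⟨k, hKk, hk2K, hk⟩ := part_i K hK
  have hτk : 0 ≤ τ k := hτ k ▸ by positivity
  have hε (ε : ℝ) (hε : 0 < ε) (hle : 1 / ε ^ 2 ≤ max (1 / ε1 ^ 2) (1 / ε2 ^ 2)) :
      τ k + ‖z (k + 1) - z k‖ / β ≤ ε :=
    hk.trans <| div_sqrt_le_of_sq_mul_one_div_sq_le hε <|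
      (mul_le_mul_of_nonneg_left hle (sq_nonneg _)).trans hKε
  exact ⟨k, hKk, hk2K, hε ε1 hε1 (le_max_left _ _),
    by linarith [hε ε2 hε2 (le_max_right _ _)]⟩

/-- Quantitative core of Theorem 3.2(a) (outer iteration complexity), abstract form:
with `τ_k = s̄/(k+1)²`, `r₀ = ‖z⁰ − z*‖`, and `‖z^{k+1} − J z^k‖ ≤ β√n τ_k`,
(i) for every `K ≥ 1` there is `K ≤ k ≤ 2K` with
`τ_k + ‖z^{k+1} − z^k‖/β ≤ (s̄ + √2(r₀ + 4√n s̄ β)/β)/√(K+1)`; and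
(ii) if moreover `K + 1 ≥ (s̄ + √2(r₀ + 4√n s̄ β)/β)² max{ε₁⁻², ε₂⁻²}` for
`ε₁, ε₂ ∈ (0,1)`, then some `K ≤ k ≤ 2K` satisfies
`τ_k + ‖z^{k+1} − z^k‖/β ≤ ε₁` and `‖z^{k+1} − z^k‖/β ≤ ε₂`. -/
theorem stmt_4 {H : Type*} [NormedAddCommGroup H] [InnerProductSpace ℝ H]
    (J : H → H)
    (hJ : ∀ x y : H, ‖J x - J y‖ ^ 2 + ‖(x - J x) - (y - J y)‖ ^ 2 ≤ ‖x - y‖ ^ 2)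
    (zstar : H) (hfix : J zstar = zstar)
    (β sbar : ℝ) (hβ : 0 < β) (hsbar : 0 < sbar) (n : ℕ) (hn : 1 ≤ n)
    (τ : ℕ → ℝ) (hτ : ∀ k : ℕ, τ k = sbar / ((k : ℝ) + 1) ^ 2)
    (z : ℕ → H)
    (r0 : ℝ) (hr0 : r0 = ‖z 0 - zstar‖)
    (hz : ∀ k : ℕ, ‖z (k + 1) - J (z k)‖ ≤ β * Real.sqrt n * τ k) :
    (∀ K : ℕ, 1 ≤ K →
      ∃ k : ℕ, K ≤ k ∧ k ≤ 2 * K ∧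
        τ k + ‖z (k + 1) - z k‖ / β ≤
          (sbar + Real.sqrt 2 * (r0 + 4 * Real.sqrt n * sbar * β) / β) /
            Real.sqrt ((K : ℝ) + 1)) ∧
    (∀ K : ℕ, 1 ≤ K → ∀ ε1 ε2 : ℝ, 0 < ε1 → ε1 < 1 → 0 < ε2 → ε2 < 1 →
      (sbar + Real.sqrt 2 * (r0 + 4 * Real.sqrt n * sbar * β) / β) ^ 2 *
          max (1 / ε1 ^ 2) (1 / ε2 ^ 2) ≤ (K : ℝ) + 1 →
      ∃ k : ℕ, K ≤ k ∧ k ≤ 2 * K ∧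
        τ k + ‖z (k + 1) - z k‖ / β ≤ ε1 ∧ ‖z (k + 1) - z k‖ / β ≤ ε2) :=
  stmt_4_general J hJ zstar hfix β sbar hβ hsbar n τ hτ z r0 hr0 hz
end

section
/- Assume the hypotheses of the one-step ADMM descent inequality: σ > 0, P_0, …, P_n : ℝ^d → ℝ differentiable with σ-strongly monotone gradients, h : ℝ^d → ℝ convex, ρ_i > 0, a KKT point (w*, λ_i*, h*) with ∇P_i(w*) + λ_i* = 0 (1 ≤ i ≤ n) and ∇P_0(w*) + h* − Σ_i λ_i* = 0 for a subgradient h* of h at w*, old iterates (u_i, λ_i), new iterates (w⁺, u_i⁺), λ_i⁺ = λ_i + ρ_i(u_i⁺ − w⁺), a subgradient h⁺ of h at w⁺ with ‖∇P_0(w⁺) + h⁺ + Σ_i (ρ_i(u_i⁺ − u_i) − λ_i⁺)‖ ≤ ε and ‖∇P_i(u_i⁺) + λ_i⁺‖ ≤ ε for all i, where ε = q^t for some q ∈ (0,1) and t ≥ 0. Assume additionally that for some L > 0 and each 1 ≤ i ≤ n, ‖∇P_i(w*) − ∇P_i(u_i⁺)‖ ≤ L‖w* − u_i⁺‖. Define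 S = Σ_{i=1}^n ( (ρ_i/2)‖w* − u_i‖² + (1/(2ρ_i))‖λ_i* − λ_i‖² ), S⁺ = Σ_{i=1}^n ( (ρ_i/2)‖w* − u_i⁺‖² + (1/(2ρ_i))‖λ_i* − λ_i⁺‖² ), and r = min_{1≤i≤n} σρ_i/(ρ_i² + 2L²). Then (1 + r)·S⁺ ≤ S + ( (n+1)/(2σ) + Σ_{i=1}^n σ/(ρ_i² + 2L²) )·q^{2t}. -/
/-!
Two estimates make up the contraction. Strong monotonicity of `∇P_i` at `(u_i⁺, w*)` and of
`∇P_0` at `(w⁺, w*)`, together with monotonicity of `∂h`, gives after summation the descent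
`S⁺ + (σ/2) Σ_i ‖w* − u_i⁺‖² ≤ S + (n+1) ε²/(2σ)`: the cross terms produced by the dual update
telescope into `S − S⁺` up to a nonnegative square, and the inexactness residuals are absorbed by
Young's inequality. Since `λ_i* = −∇P_i(w*)`, the dual part of `S⁺` is controlled by the primal
part, `‖λ_i* − λ_i⁺‖² ≤ 2L²‖w* − u_i⁺‖² + 2ε²`, so `r S⁺` is dominated by the gain
`(σ/2) Σ_i ‖w* − u_i⁺‖²` up to `Σ_i σ ε²/(ρ_i² + 2L²)`.
-/

open scoped RealInnerProductSpace

section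

variable {E : Type*} [NormedAddCommGroup E] {wstar lamstar u lam wplus uplus lamplus : E}

theorem norm_sub_sq_le_of_lipschitz {F : E → E} {L ε : ℝ} (hkkt : F wstar + lamstar = 0)
    (hLip : ‖F wstar - F uplus‖ ≤ L * ‖wstar - uplus‖) (hres : ‖F uplus + lamplus‖ ≤ ε) :
    ‖lamstar - lamplus‖ ^ 2 ≤ 2 * L ^ 2 * ‖wstar - uplus‖ ^ 2 + 2 * ε ^ 2 := by
  have hsplit : lamstar - lamplus = (F uplus - F wstar) - (F uplus + lamplus) := by
    rw [eq_neg_of_add_eq_zero_left hkkt]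
    abel
  have hnorm : ‖lamstar - lamplus‖ ≤ L * ‖wstar - uplus‖ + ε := by
    rw [hsplit]
    refine (norm_sub_le _ _).trans ?_
    rw [norm_sub_rev]
    exact add_le_add hLip hres
  calc ‖lamstar - lamplus‖ ^ 2 ≤ (L * ‖wstar - uplus‖ + ε) ^ 2 := by gcongr
    _ ≤ 2 * L ^ 2 * ‖wstar - uplus‖ ^ 2 + 2 * ε ^ 2 := by
      nlinarith [sq_nonneg (L * ‖wstar - uplus‖ - ε)]

noncomputable def admmPotential (ρ : ℝ) (wstar lamstar u lam : E) : ℝ :=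
  ρ / 2 * ‖wstar - u‖ ^ 2 + 1 / (2 * ρ) * ‖lamstar - lam‖ ^ 2

theorem mul_admmPotential_le {F : E → E} {σ ρ L ε r : ℝ} (hσ : 0 ≤ σ) (hρ : 0 < ρ)
    (hr : r ≤ σ * ρ / (ρ ^ 2 + 2 * L ^ 2)) (hkkt : F wstar + lamstar = 0)
    (hLip : ‖F wstar - F uplus‖ ≤ L * ‖wstar - uplus‖) (hres : ‖F uplus + lamplus‖ ≤ ε) :
    r * admmPotential ρ wstar lamstar uplus lamplus
      ≤ σ / 2 * ‖wstar - uplus‖ ^ 2 + σ / (ρ ^ 2 + 2 * L ^ 2) * ε ^ 2 := by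
  have hdual := norm_sub_sq_le_of_lipschitz hkkt hLip hres
  have hpos : 0 < ρ ^ 2 + 2 * L ^ 2 := by positivity
  calc r * admmPotential ρ wstar lamstar uplus lamplus
      ≤ σ * ρ / (ρ ^ 2 + 2 * L ^ 2) * admmPotential ρ wstar lamstar uplus lamplus := by
        gcongr
        unfold admmPotential
        positivity
    _ ≤ σ * ρ / (ρ ^ 2 + 2 * L ^ 2) * (ρ / 2 * ‖wstar - uplus‖ ^ 2
          + 1 / (2 * ρ) * (2 * L ^ 2 * ‖wstar - uplus‖ ^ 2 + 2 * ε ^ 2)) := by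
        unfold admmPotential
        gcongr
    _ = σ / 2 * ‖wstar - uplus‖ ^ 2 + σ / (ρ ^ 2 + 2 * L ^ 2) * ε ^ 2 := by
        field_simp
        ring

variable [InnerProductSpace ℝ E]

theorem real_inner_le_sq_div_add_of_norm_le {a : E} {ε c : ℝ} (hc : 0 < c) (ha : ‖a‖ ≤ ε)
    (b : E) : ⟪a, b⟫ ≤ ε ^ 2 / (2 * c) + c / 2 * ‖b‖ ^ 2 := by
  have amgm : ε * ‖b‖ ≤ ε ^ 2 / (2 * c) + c / 2 * ‖b‖ ^ 2 := by
    have gap : ε ^ 2 / (2 * c) + c / 2 * ‖b‖ ^ 2 - ε * ‖b‖ = (ε - c * ‖b‖) ^ 2 / (2 * c) := by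
      field_simp
      ring
    have : 0 ≤ (ε - c * ‖b‖) ^ 2 / (2 * c) := by positivity
    linarith
  calc ⟪a, b⟫ ≤ ‖a‖ * ‖b‖ := real_inner_le_norm a b
    _ ≤ ε * ‖b‖ := by gcongr
    _ ≤ _ := amgm

theorem inner_sub_nonneg_of_subgradient {f : E → ℝ} {x y g g' : E}
    (hg : ∀ z, f x + ⟪g, z - x⟫ ≤ f z) (hg' : ∀ z, f y + ⟪g', z - y⟫ ≤ f z) :
    0 ≤ ⟪g - g', x - y⟫ := by
  have hxy := hg y
  have hyx := hg' x
  rw [← neg_sub x y, inner_neg_right] at hxy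
  rw [inner_sub_left]
  linarith

theorem admmPotential_sub_admmPotential {ρ : ℝ} (hρ : ρ ≠ 0)
    (hlam : lamplus = lam + ρ • (uplus - wplus)) :
    admmPotential ρ wstar lamstar u lam - admmPotential ρ wstar lamstar uplus lamplus
      = ⟪lamstar - lamplus, uplus - wstar⟫
        + ⟪lamplus - lamstar - ρ • (uplus - u), wplus - wstar⟫ + ρ / 2 * ‖u - wplus‖ ^ 2 := by
  unfold admmPotential
  set a := wstar - uplus
  set b := uplus - u
  set c := uplus - wplus
  set m := lamstar - lamplus
  have e₁ : wstar - u = a + b := by simp only [a, b]; abel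
  have e₂ : lamstar - lam = m + ρ • c := by simp only [m, c, hlam]; abel
  have e₃ : uplus - wstar = -a := by simp only [a]; abel
  have e₄ : lamplus - lamstar - ρ • b = -(m + ρ • b) := by simp only [m]; abel
  have e₅ : wplus - wstar = -(a + c) := by simp only [a, c]; abel
  have e₆ : u - wplus = c - b := by simp only [b, c]; abel
  simp only [e₁, e₂, e₃, e₄, e₅, e₆, norm_add_sq_real, norm_sub_sq_real,
    norm_smul, Real.norm_eq_abs, mul_pow, sq_abs, inner_neg_left, inner_neg_right,
    inner_add_left, inner_add_right, real_inner_smul_left, real_inner_smul_right,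
    real_inner_comm a b, real_inner_comm a m, real_inner_comm b c]
  field_simp
  ring

theorem admm_client_estimate {F : E → E} {σ ρ ε : ℝ} (hσ : 0 < σ) (hρ : 0 < ρ)
    (hmono : ∀ x y, σ * ‖x - y‖ ^ 2 ≤ ⟪F x - F y, x - y⟫) (hkkt : F wstar + lamstar = 0)
    (hlam : lamplus = lam + ρ • (uplus - wplus)) (hres : ‖F uplus + lamplus‖ ≤ ε) :
    σ / 2 * ‖wstar - uplus‖ ^ 2 + admmPotential ρ wstar lamstar uplus lamplus
        + ⟪lamplus - lamstar - ρ • (uplus - u), wplus - wstar⟫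
      ≤ admmPotential ρ wstar lamstar u lam + ε ^ 2 / (2 * σ) := by
  have hmono_at := hmono uplus wstar
  have hsplit : F uplus - F wstar = (F uplus + lamplus) + (lamstar - lamplus) := by
    rw [eq_neg_of_add_eq_zero_left hkkt]
    abel
  rw [hsplit, inner_add_left, norm_sub_rev] at hmono_at
  have hyoung := real_inner_le_sq_div_add_of_norm_le hσ hres (uplus - wstar)
  rw [norm_sub_rev] at hyoung
  have hpot := admmPotential_sub_admmPotential (wstar := wstar) (lamstar := lamstar) (u := u)
    hρ.ne' hlam
  have : 0 ≤ ρ / 2 * ‖u - wplus‖ ^ 2 := by positivity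
  linarith

theorem admm_server_estimate {ι : Type*} [Fintype ι] {F : E → E} {f : E → ℝ} {σ ε : ℝ}
    (hσ : 0 < σ) {ρ : ι → ℝ} {hstar hplus : E} {lamstar u uplus lamplus : ι → E}
    (hmono : ∀ x y, σ * ‖x - y‖ ^ 2 ≤ ⟪F x - F y, x - y⟫)
    (hsubstar : ∀ y, f wstar + ⟪hstar, y - wstar⟫ ≤ f y)
    (hkkt : F wstar + hstar - ∑ i, lamstar i = 0)
    (hsubplus : ∀ y, f wplus + ⟪hplus, y - wplus⟫ ≤ f y)
    (hres : ‖F wplus + hplus + ∑ i, (ρ i • (uplus i - u i) - lamplus i)‖ ≤ ε) :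
    σ / 2 * ‖wplus - wstar‖ ^ 2
      ≤ ε ^ 2 / (2 * σ) + ∑ i, ⟪lamplus i - lamstar i - ρ i • (uplus i - u i), wplus - wstar⟫ := by
  have hmono_at := hmono wplus wstar
  have hsplit : F wplus - F wstar
      = (F wplus + hplus + ∑ i, (ρ i • (uplus i - u i) - lamplus i)) - (hplus - hstar)
        + ∑ i, (lamplus i - lamstar i - ρ i • (uplus i - u i)) := by
    have hF : F wstar = ∑ i, lamstar i - hstar := by
      rw [← sub_eq_zero.mp hkkt]
      abel
    rw [hF]
    simp only [Finset.sum_sub_distrib]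
    abel
  rw [hsplit, inner_add_left, inner_sub_left, sum_inner] at hmono_at
  have hyoung := real_inner_le_sq_div_add_of_norm_le hσ hres (wplus - wstar)
  have hsub := inner_sub_nonneg_of_subgradient hsubplus hsubstar
  linarith

end

theorem stmt_12_general {d : ℕ} (n : ℕ) (σ q L : ℝ) (hσ : 0 < σ) (t : ℕ)
    (P0' : EuclideanSpace ℝ (Fin d) → EuclideanSpace ℝ (Fin d))
    (P' : Fin n → EuclideanSpace ℝ (Fin d) → EuclideanSpace ℝ (Fin d))
    (hmono0 : ∀ x y, σ * ‖x - y‖ ^ 2 ≤ ⟪P0' x - P0' y, x - y⟫)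
    (hmono : ∀ i, ∀ x y, σ * ‖x - y‖ ^ 2 ≤ ⟪P' i x - P' i y, x - y⟫)
    (h : EuclideanSpace ℝ (Fin d) → ℝ)
    (ρ : Fin n → ℝ) (hρ : ∀ i, 0 < ρ i) (ε : ℝ) (hεq : ε = q ^ t)
    -- KKT point
    (wstar : EuclideanSpace ℝ (Fin d)) (lamstar : Fin n → EuclideanSpace ℝ (Fin d))
    (hstar : EuclideanSpace ℝ (Fin d))
    (hsubstar : ∀ y, h wstar + ⟪hstar, y - wstar⟫ ≤ h y)
    (hKKT1 : ∀ i, P' i wstar + lamstar i = 0)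
    (hKKT2 : P0' wstar + hstar - ∑ i, lamstar i = 0)
    -- old and new iterates
    (u lam : Fin n → EuclideanSpace ℝ (Fin d))
    (wplus : EuclideanSpace ℝ (Fin d)) (uplus : Fin n → EuclideanSpace ℝ (Fin d))
    (lamplus : Fin n → EuclideanSpace ℝ (Fin d))
    (hlamplus : ∀ i, lamplus i = lam i + ρ i • (uplus i - wplus))
    (hserver : ∃ hplus : EuclideanSpace ℝ (Fin d),
      (∀ y, h wplus + ⟪hplus, y - wplus⟫ ≤ h y) ∧
      ‖P0' wplus + hplus + ∑ i, (ρ i • (uplus i - u i) - lamplus i)‖ ≤ ε)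
    (hclient : ∀ i, ‖P' i (uplus i) + lamplus i‖ ≤ ε)
    -- Lipschitz bound at the new client iterates
    (hLip : ∀ i, ‖P' i wstar - P' i (uplus i)‖ ≤ L * ‖wstar - uplus i‖)
    -- potential values and contraction factor
    (S Splus r : ℝ)
    (hS : S = ∑ i, ((ρ i / 2) * ‖wstar - u i‖ ^ 2 +
      (1 / (2 * ρ i)) * ‖lamstar i - lam i‖ ^ 2))
    (hSplus : Splus = ∑ i, ((ρ i / 2) * ‖wstar - uplus i‖ ^ 2 +
      (1 / (2 * ρ i)) * ‖lamstar i - lamplus i‖ ^ 2))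
    (hr : r = ⨅ i : Fin n, σ * ρ i / (ρ i ^ 2 + 2 * L ^ 2)) :
    (1 + r) * Splus ≤
      S + (((n : ℝ) + 1) / (2 * σ) + ∑ i, σ / (ρ i ^ 2 + 2 * L ^ 2)) * q ^ (2 * t) := by
  obtain ⟨hplus, hsubplus, hres⟩ := hserver
  have hr_le (i : Fin n) : r ≤ σ * ρ i / (ρ i ^ 2 + 2 * L ^ 2) :=
    hr ▸ ciInf_le (Set.finite_range _).bddBelow i
  have server := admm_server_estimate hσ hmono0 hsubstar hKKT2 hsubplus hres
  have clients := Finset.sum_le_sum fun i (_ : i ∈ Finset.univ) =>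
    admm_client_estimate (u := u i) hσ (hρ i) (hmono i) (hKKT1 i) (hlamplus i) (hclient i)
  have contraction := Finset.sum_le_sum fun i (_ : i ∈ Finset.univ) =>
    mul_admmPotential_le hσ.le (hρ i) (hr_le i) (hKKT1 i) (hLip i) (hclient i)
  simp only [Finset.sum_add_distrib, Finset.sum_const, Finset.card_univ, Fintype.card_fin,
    nsmul_eq_mul, ← Finset.mul_sum, ← Finset.sum_mul] at clients contraction
  have hS' : S = ∑ i, admmPotential (ρ i) wstar (lamstar i) (u i) (lam i) := hS
  have hSplus' : Splus = ∑ i, admmPotential (ρ i) wstar (lamstar i) (uplus i) (lamplus i) :=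
    hSplus
  have server_gain : 0 ≤ σ / 2 * ‖wplus - wstar‖ ^ 2 := by positivity
  rw [hS', hSplus', pow_mul', ← hεq]
  linear_combination server + clients + contraction + server_gain

/-- One-step contraction of the ADMM potential (key inequality in Lemma 4.3):
under the one-step descent hypotheses with accuracy `ε = q^t` and the Lipschitz
bound `‖∇P_i(w*) − ∇P_i(u_i⁺)‖ ≤ L‖w* − u_i⁺‖`, with
`S = Σ_i ((ρ_i/2)‖w* − u_i‖² + (1/2ρ_i)‖λ_i* − λ_i‖²)`,
`S⁺` the analogous quantity for the new iterates and
`r = min_i σρ_i/(ρ_i² + 2L²)`, one has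
`(1+r) S⁺ ≤ S + ((n+1)/(2σ) + Σ_i σ/(ρ_i² + 2L²)) q^{2t}`. -/
theorem stmt_12 {d : ℕ} (n : ℕ) (hn : 1 ≤ n) (σ q L : ℝ) (hσ : 0 < σ)
    (hq0 : 0 < q) (hq1 : q < 1) (hL : 0 < L) (t : ℕ)
    (P0 : EuclideanSpace ℝ (Fin d) → ℝ) (P0' : EuclideanSpace ℝ (Fin d) → EuclideanSpace ℝ (Fin d))
    (hP0 : ∀ x, HasGradientAt P0 (P0' x) x)
    (P : Fin n → EuclideanSpace ℝ (Fin d) → ℝ)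
    (P' : Fin n → EuclideanSpace ℝ (Fin d) → EuclideanSpace ℝ (Fin d))
    (hP : ∀ i x, HasGradientAt (P i) (P' i x) x)
    (hmono0 : ∀ x y, σ * ‖x - y‖ ^ 2 ≤ ⟪P0' x - P0' y, x - y⟫)
    (hmono : ∀ i, ∀ x y, σ * ‖x - y‖ ^ 2 ≤ ⟪P' i x - P' i y, x - y⟫)
    (h : EuclideanSpace ℝ (Fin d) → ℝ) (hh : ConvexOn ℝ Set.univ h)
    (ρ : Fin n → ℝ) (hρ : ∀ i, 0 < ρ i) (ε : ℝ) (hεq : ε = q ^ t)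
    -- KKT point
    (wstar : EuclideanSpace ℝ (Fin d)) (lamstar : Fin n → EuclideanSpace ℝ (Fin d))
    (hstar : EuclideanSpace ℝ (Fin d))
    (hsubstar : ∀ y, h wstar + ⟪hstar, y - wstar⟫ ≤ h y)
    (hKKT1 : ∀ i, P' i wstar + lamstar i = 0)
    (hKKT2 : P0' wstar + hstar - ∑ i, lamstar i = 0)
    -- old and new iterates
    (u lam : Fin n → EuclideanSpace ℝ (Fin d))
    (wplus : EuclideanSpace ℝ (Fin d)) (uplus : Fin n → EuclideanSpace ℝ (Fin d))
    (lamplus : Fin n → EuclideanSpace ℝ (Fin d))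
    (hlamplus : ∀ i, lamplus i = lam i + ρ i • (uplus i - wplus))
    (hserver : ∃ hplus : EuclideanSpace ℝ (Fin d),
      (∀ y, h wplus + ⟪hplus, y - wplus⟫ ≤ h y) ∧
      ‖P0' wplus + hplus + ∑ i, (ρ i • (uplus i - u i) - lamplus i)‖ ≤ ε)
    (hclient : ∀ i, ‖P' i (uplus i) + lamplus i‖ ≤ ε)
    -- Lipschitz bound at the new client iterates
    (hLip : ∀ i, ‖P' i wstar - P' i (uplus i)‖ ≤ L * ‖wstar - uplus i‖)
    -- potential values and contraction factor
    (S Splus r : ℝ)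
    (hS : S = ∑ i, ((ρ i / 2) * ‖wstar - u i‖ ^ 2 +
      (1 / (2 * ρ i)) * ‖lamstar i - lam i‖ ^ 2))
    (hSplus : Splus = ∑ i, ((ρ i / 2) * ‖wstar - uplus i‖ ^ 2 +
      (1 / (2 * ρ i)) * ‖lamstar i - lamplus i‖ ^ 2))
    (hr : r = ⨅ i : Fin n, σ * ρ i / (ρ i ^ 2 + 2 * L ^ 2)) :
    (1 + r) * Splus ≤
      S + (((n : ℝ) + 1) / (2 * σ) + ∑ i, σ / (ρ i ^ 2 + 2 * L ^ 2)) * q ^ (2 * t) :=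
  stmt_12_general n σ q L hσ t P0' P' hmono0 hmono h ρ hρ ε hεq wstar lamstar hstar hsubstar hKKT1
    hKKT2 u lam wplus uplus lamplus hlamplus hserver hclient hLip S Splus r hS hSplus hr
end
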